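/- arXiv:1504.05625 — 2 statements merged into one kernel-verified Lean document; each statement's English description precedes it below -/
import Mathlib

section
/- Define the power functional Q : (∂N → ℝ) → ℝ by Q(ψ) = inf { P(φ) | φ : N → ℝ extends ψ }. Let ψ : ∂N → ℝ be a boundary potential and let φ be any potential obeying the principle of minimum power for ψ, with induced current I and boundary current ι : ∂N → ℝ given by ι(n) = ∑_{e : t(e)=n} I(e) − ∑_{e : s(e)=n} I(e). Then for every ψ' : ∂N → ℝ, the function λ ↦ Q(ψ + λ·ψ') is differentiable at λ = 0 with derivative equal to ∑_{n ∈ ∂N} ι(n)·ψ'(n). -/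
open Finset

/-- The extended power functional of a circuit of linear resistors. -/
noncomputable def extPower {E N : Type*} [Fintype E] (s t : E → N) (r : E → ℝ)
    (φ : N → ℝ) : ℝ :=
  (1 / 2) * ∑ e, (1 / r e) * (φ (t e) - φ (s e)) ^ 2

/-- `φ` obeys the principle of minimum power for the boundary potential `ψ`:
it extends `ψ` and minimizes the extended power functional among extensions of `ψ`. -/
def MinimizesPower {E N : Type*} [Fintype E] (s t : E → N) (r : E → ℝ)
    (B : Finset N) (ψ : B → ℝ) (φ : N → ℝ) : Prop :=
  (∀ n : B, φ n = ψ n) ∧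
    ∀ φ' : N → ℝ, (∀ n : B, φ' n = ψ n) → extPower s t r φ ≤ extPower s t r φ'

/-- Two nodes lie in the same connected component of the circuit. -/
def SameComponent {E N : Type*} (s t : E → N) : N → N → Prop :=
  Relation.EqvGen fun a b => ∃ e, s e = a ∧ t e = b

/-- The connected component of the node `n` touches the boundary `B`. -/
def Touches {E N : Type*} (s t : E → N) (B : Finset N) (n : N) : Prop :=
  ∃ m ∈ B, SameComponent s t n m


/-- The power functional `Q` of the circuit: the infimum of the extended power functional
over all extensions of the boundary potential. -/
noncomputable def powerFunctional {E N : Type*} [Fintype E] (s t : E → N) (r : E → ℝ)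
    (B : Finset N) (χ : B → ℝ) : ℝ :=
  sInf {x : ℝ | ∃ φ : N → ℝ, (∀ n : B, φ n = χ n) ∧ extPower s t r φ = x}

section Aux


variable {E N : Type*} [Fintype E]

/-- The associated bilinear form. -/
noncomputable def circBil (s t : E → N) (r : E → ℝ) (a b : N → ℝ) : ℝ :=
  ∑ e, (1 / r e) * (a (t e) - a (s e)) * (b (t e) - b (s e))

lemma extPower_nonneg (s t : E → N) (r : E → ℝ) (hr : ∀ e, 0 < r e) (a : N → ℝ) :
    0 ≤ extPower s t r a := by
  unfold extPower
  have : ∀ e ∈ (univ : Finset E), 0 ≤ (1 / r e) * (a (t e) - a (s e)) ^ 2 := fun e _ =>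
    mul_nonneg (one_div_nonneg.2 (hr e).le) (sq_nonneg _)
  have := Finset.sum_nonneg this
  linarith

lemma extPower_add (s t : E → N) (r : E → ℝ) (a b : N → ℝ) :
    extPower s t r (a + b) = extPower s t r a + circBil s t r a b + extPower s t r b := by
  unfold extPower circBil
  rw [Finset.mul_sum, Finset.mul_sum, Finset.mul_sum, ← Finset.sum_add_distrib,
    ← Finset.sum_add_distrib]
  refine Finset.sum_congr rfl fun e _ => ?_
  simp only [Pi.add_apply]
  ring

lemma circBil_smul (s t : E → N) (r : E → ℝ) (a b : N → ℝ) (c : ℝ) :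
    circBil s t r a (c • b) = c * circBil s t r a b := by
  unfold circBil
  rw [Finset.mul_sum]
  refine Finset.sum_congr rfl fun e _ => ?_
  simp only [Pi.smul_apply, smul_eq_mul]
  ring

lemma extPower_smul (s t : E → N) (r : E → ℝ) (b : N → ℝ) (c : ℝ) :
    extPower s t r (c • b) = c ^ 2 * extPower s t r b := by
  unfold extPower
  rw [Finset.mul_sum, Finset.mul_sum, Finset.mul_sum]
  refine Finset.sum_congr rfl fun e _ => ?_
  simp only [Pi.smul_apply, smul_eq_mul]
  ring

/-- orthogonality of the minimizer against admissible variations -/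
lemma circBil_eq_zero (s t : E → N) (r : E → ℝ) (hr : ∀ e, 0 < r e) (B : Finset N)
    (ψ : B → ℝ) (φ : N → ℝ) (hφ : MinimizesPower s t r B ψ φ)
    (η : N → ℝ) (hη : ∀ n : B, η n = 0) : circBil s t r φ η = 0 := by
  set b := circBil s t r φ η with hb
  set c := extPower s t r η with hc
  have hc0 : 0 ≤ c := extPower_nonneg s t r hr η
  have key : ∀ lam : ℝ, 0 ≤ lam * b + lam ^ 2 * c := by
    intro lam
    have h1 : ∀ n : B, (φ + lam • η) n = ψ n := by
      intro n
      simp [hη n, hφ.1 n]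
    have h2 := hφ.2 (φ + lam • η) h1
    rw [extPower_add, circBil_smul, extPower_smul] at h2
    linarith
  have h := key (-b / (c + 1))
  have hpos : (0:ℝ) < c + 1 := by linarith
  have key2 : -b / (c + 1) * b + (-b / (c + 1)) ^ 2 * c = -(b ^ 2) / (c + 1) ^ 2 := by
    field_simp
    ring
  rw [key2] at h
  have h'' : 0 ≤ -(b ^ 2) := by
    have h3 := mul_nonneg h (le_of_lt (pow_pos hpos 2))
    rwa [div_mul_cancel₀ _ (by positivity : ((c:ℝ) + 1) ^ 2 ≠ 0)] at h3
  have hb2 : b ^ 2 = 0 := le_antisymm (by linarith) (sq_nonneg b)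
  exact pow_eq_zero_iff two_ne_zero |>.mp hb2

/-- The node current of `φ` at `n`. -/
noncomputable def nodeCur [Fintype N] [DecidableEq N] (s t : E → N) (r : E → ℝ)
    (φ : N → ℝ) (n : N) : ℝ :=
  (∑ e ∈ univ.filter fun e => t e = n, (1 / r e) * (φ (t e) - φ (s e))) -
    ∑ e ∈ univ.filter fun e => s e = n, (1 / r e) * (φ (t e) - φ (s e))

lemma circBil_eq_sum_nodes [Fintype N] [DecidableEq N] (s t : E → N) (r : E → ℝ)
    (φ χ : N → ℝ) :
    circBil s t r φ χ = ∑ n : N, nodeCur s t r φ n * χ n := by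
  unfold circBil nodeCur
  have h1 : ∑ e, (1 / r e) * (φ (t e) - φ (s e)) * χ (t e)
      = ∑ n : N, (∑ e ∈ univ.filter fun e => t e = n, (1 / r e) * (φ (t e) - φ (s e))) * χ n := by
    rw [← Finset.sum_fiberwise (univ : Finset E) t
      (fun e => (1 / r e) * (φ (t e) - φ (s e)) * χ (t e))]
    refine Finset.sum_congr rfl fun n _ => ?_
    rw [Finset.sum_mul]
    refine Finset.sum_congr rfl fun e he => ?_
    rw [(Finset.mem_filter.1 he).2]
  have h2 : ∑ e, (1 / r e) * (φ (t e) - φ (s e)) * χ (s e)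
      = ∑ n : N, (∑ e ∈ univ.filter fun e => s e = n, (1 / r e) * (φ (t e) - φ (s e))) * χ n := by
    rw [← Finset.sum_fiberwise (univ : Finset E) s
      (fun e => (1 / r e) * (φ (t e) - φ (s e)) * χ (s e))]
    refine Finset.sum_congr rfl fun n _ => ?_
    rw [Finset.sum_mul]
    refine Finset.sum_congr rfl fun e he => ?_
    rw [(Finset.mem_filter.1 he).2]
  calc ∑ e, (1 / r e) * (φ (t e) - φ (s e)) * (χ (t e) - χ (s e))
      = (∑ e, (1 / r e) * (φ (t e) - φ (s e)) * χ (t e))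
        - ∑ e, (1 / r e) * (φ (t e) - φ (s e)) * χ (s e) := by
        rw [← Finset.sum_sub_distrib]; refine Finset.sum_congr rfl fun e _ => by ring
    _ = _ := by rw [h1, h2, ← Finset.sum_sub_distrib]
                refine Finset.sum_congr rfl fun n _ => by ring

lemma nodeCur_interior [Fintype N] [DecidableEq N] (s t : E → N) (r : E → ℝ)
    (hr : ∀ e, 0 < r e) (B : Finset N) (ψ : B → ℝ) (φ : N → ℝ)
    (hφ : MinimizesPower s t r B ψ φ) (m : N) (hm : m ∉ B) :
    nodeCur s t r φ m = 0 := by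
  have h := circBil_eq_zero s t r hr B ψ φ hφ (Pi.single m 1) (by
    intro n
    have : (n : N) ≠ m := fun h => hm (h ▸ n.2)
    simp [Pi.single_apply, this])
  rw [circBil_eq_sum_nodes] at h
  rw [← h]
  rw [Finset.sum_eq_single m]
  · simp
  · intro n _ hn; simp [Pi.single_apply, hn]
  · simp

lemma circBil_eq_boundary [Fintype N] [DecidableEq N] (s t : E → N) (r : E → ℝ)
    (hr : ∀ e, 0 < r e) (B : Finset N) (ψ : B → ℝ) (φ : N → ℝ)
    (hφ : MinimizesPower s t r B ψ φ) (ψ' : B → ℝ) (χ : N → ℝ)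
    (hχ : ∀ n : B, χ n = ψ' n) :
    circBil s t r φ χ = ∑ n : B, nodeCur s t r φ n * ψ' n := by
  rw [circBil_eq_sum_nodes]
  rw [← Finset.sum_subset (Finset.subset_univ B) (fun n _ hn => by
    rw [nodeCur_interior s t r hr B ψ φ hφ n hn, zero_mul])]
  rw [← Finset.sum_attach B (fun n => nodeCur s t r φ n * χ n)]
  exact Finset.sum_congr rfl fun n _ => by rw [hχ n]

end Aux

/-- If `φ` obeys the principle of minimum power for `ψ`, with induced
current `I(e) = (1/r e)·(φ(t e) - φ(s e))` and boundary current
`ι(n) = ∑_{t e = n} I e - ∑_{s e = n} I e`, then for every `ψ'` the function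
`λ ↦ Q(ψ + λ·ψ')` is differentiable at `0` with derivative `∑_{n ∈ ∂N} ι(n)·ψ'(n)`. -/
theorem statement4 {E N : Type*} [Fintype E] [Fintype N] [DecidableEq N]
    (s t : E → N) (r : E → ℝ) (hr : ∀ e, 0 < r e) (B : Finset N)
    (ψ : B → ℝ) (φ : N → ℝ) (hφ : MinimizesPower s t r B ψ φ) (ψ' : B → ℝ) :
    HasDerivAt (fun lam : ℝ => powerFunctional s t r B (ψ + lam • ψ'))
      (∑ n : B,
        ((∑ e ∈ univ.filter fun e => t e = (n : N), (1 / r e) * (φ (t e) - φ (s e))) -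
          ∑ e ∈ univ.filter fun e => s e = (n : N), (1 / r e) * (φ (t e) - φ (s e))) *
          ψ' n)
      0 := by
  classical
  set D : ℝ := ∑ n : B, nodeCur s t r φ n * ψ' n with hD
  -- an explicit extension of ψ'
  set χ : N → ℝ := fun n => if h : n ∈ B then ψ' ⟨n, h⟩ else 0 with hχdef
  have hχ : ∀ n : B, χ n = ψ' n := fun n => by simp [hχdef, n.2]
  set C : ℝ := extPower s t r χ with hC
  have hC0 : 0 ≤ C := extPower_nonneg s t r hr χ
  set g : ℝ → ℝ := fun lam => powerFunctional s t r B (ψ + lam • ψ') with hg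
  have hBilχ : circBil s t r φ χ = D :=
    circBil_eq_boundary s t r hr B ψ φ hφ ψ' χ hχ
  -- lower bound for all elements in the infimum set
  have lower : ∀ lam : ℝ, ∀ x ∈ {x : ℝ | ∃ φ'' : N → ℝ,
      (∀ n : B, φ'' n = (ψ + lam • ψ') n) ∧ extPower s t r φ'' = x},
      extPower s t r φ + lam * D ≤ x := by
    intro lam x hx
    obtain ⟨φ'', hext, rfl⟩ := hx
    have hdecomp : φ'' = φ + (φ'' - φ) := by ring_nf
    have hη : ∀ n : B, (φ'' - φ) n = lam * ψ' n := by
      intro n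
      have := hext n
      simp only [Pi.add_apply, Pi.smul_apply, smul_eq_mul] at this
      simp [Pi.sub_apply, this, hφ.1 n]
    have hbil : circBil s t r φ (φ'' - φ) = lam * D := by
      have := circBil_eq_boundary s t r hr B ψ φ hφ (fun n => lam * ψ' n) (φ'' - φ) hη
      rw [this, hD, Finset.mul_sum]
      exact Finset.sum_congr rfl fun n _ => by ring
    have hP : extPower s t r φ'' = extPower s t r φ + lam * D + extPower s t r (φ'' - φ) := by
      have h := extPower_add s t r φ (φ'' - φ)
      rw [hbil, ← hdecomp] at h
      exact h
    rw [hP]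
    have := extPower_nonneg s t r hr (φ'' - φ)
    linarith
  -- membership of the explicit extension
  have mem : ∀ lam : ℝ, extPower s t r φ + lam * D + lam ^ 2 * C ∈ {x : ℝ | ∃ φ'' : N → ℝ,
      (∀ n : B, φ'' n = (ψ + lam • ψ') n) ∧ extPower s t r φ'' = x} := by
    intro lam
    refine ⟨φ + lam • χ, fun n => ?_, ?_⟩
    · simp [Pi.add_apply, Pi.smul_apply, hφ.1 n, hχ n]
    · rw [extPower_add, circBil_smul, extPower_smul, hBilχ, ← hC]
      try ring
  have hgl : ∀ lam : ℝ, extPower s t r φ + lam * D ≤ g lam := by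
    intro lam
    exact le_csInf ⟨_, mem lam⟩ (lower lam)
  have hgu : ∀ lam : ℝ, g lam ≤ extPower s t r φ + lam * D + lam ^ 2 * C := by
    intro lam
    exact csInf_le ⟨_, lower lam⟩ (mem lam)
  have hg0 : g 0 = extPower s t r φ := by
    have h1 := hgl 0
    have h2 := hgu 0
    simp at h1 h2
    linarith
  -- conclude via little-o
  have hD_eq : D = ∑ n : B,
      ((∑ e ∈ univ.filter fun e => t e = (n : N), (1 / r e) * (φ (t e) - φ (s e))) -
        ∑ e ∈ univ.filter fun e => s e = (n : N), (1 / r e) * (φ (t e) - φ (s e))) * ψ' n := rfl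
  rw [← hD_eq]
  rw [hasDerivAt_iff_isLittleO]
  have herr : ∀ lam : ℝ, ‖g lam - g 0 - (lam - 0) • D‖ ≤ C * ‖lam ^ 2‖ := by
    intro lam
    have h1 := hgl lam
    have h2 := hgu lam
    rw [hg0]
    simp only [sub_zero, smul_eq_mul, Real.norm_eq_abs]
    rw [abs_of_nonneg (by linarith), abs_of_nonneg (sq_nonneg lam)]
    nlinarith [sq_nonneg lam]
  exact (Asymptotics.IsBigO.of_bound C (Filter.Eventually.of_forall herr)).trans_isLittleO
    (by simpa using Asymptotics.isLittleO_pow_id (𝕜 := ℝ) (n := 2) one_lt_two)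
end

section
/- Let 𝔽 be a field with a set of positive elements 𝔽⁺, let P be a Dirichlet form over 𝔽 on a finite set S, and let R ⊆ S. Then: (a) every ψ : R → 𝔽 admits a realizable extension φ : S → 𝔽 with respect to P; (b) any two realizable extensions of ψ give the same value of P; and (c) there exist coefficients c'_{ij} ∈ 𝔽⁺ ∪ {0} (i, j ∈ R) such that for every ψ : R → 𝔽 and every realizable extension φ of ψ, P(φ) = ∑_{i,j ∈ R} c'_{ij}·(ψ(i) − ψ(j))². Hence the function min_{S∖R} P sending ψ to P(φ) for any realizable extension φ of ψ is a well-defined Dirichlet form over 𝔽 on R. -/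
open Finset

/-- The quadratic form `χ ↦ ∑_{i,j} c i j * (χ i - χ j)^2` determined by
coefficients `c`. -/
def qSum {F S : Type*} [Field F] [Fintype S] (c : S → S → F) (χ : S → F) : F :=
  ∑ i, ∑ j, c i j * (χ i - χ j) ^ 2

/-- The formal derivative `df_φ(χ) = f(φ + χ) - f(φ) - f(χ)`. -/
def formalDeriv {F S : Type*} [Field F] (f : (S → F) → F) (φ χ : S → F) : F :=
  f (φ + χ) - f φ - f χ

/-- The indicator function `δ_n` of a point `n`. -/
def delta {F S : Type*} [Field F] [DecidableEq S] (n : S) : S → F :=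
  fun m => if m = n then 1 else 0

/-- `φ` is a realizable extension of `ψ : R → F` with respect to `P`. -/
def RealizableExt {F S : Type*} [Field F] [Fintype S] [DecidableEq S]
    (P : (S → F) → F) (R : Finset S) (ψ : R → F) (φ : S → F) : Prop :=
  (∀ x : R, φ x = ψ x) ∧ ∀ x ∉ R, formalDeriv P φ (delta x) = 0

section Aux
variable {F S : Type*} [Field F] [Fintype S] [DecidableEq S]

lemma cone_iff {Fpos : Set F} {a : F} : a ∈ Fpos ∪ {0} ↔ a ∈ Fpos ∨ a = 0 := by
  simp only [Set.mem_union, Set.mem_singleton_iff]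

variable {Fpos : Set F}

lemma cone_add (h0 : (0:F) ∉ Fpos) (hadd : ∀ x ∈ Fpos, ∀ y ∈ Fpos, x + y ∈ Fpos)
    {a b : F} (ha : a ∈ Fpos ∪ {0}) (hb : b ∈ Fpos ∪ {0}) : a + b ∈ Fpos ∪ {0} := by
  rcases cone_iff.mp ha with ha | ha <;> rcases cone_iff.mp hb with hb | hb <;>
    simp_all [cone_iff] <;> exact Or.inl (hadd _ ha _ hb)

lemma cone_add_eq_zero (h0 : (0:F) ∉ Fpos) (hadd : ∀ x ∈ Fpos, ∀ y ∈ Fpos, x + y ∈ Fpos)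
    {a b : F} (ha : a ∈ Fpos ∪ {0}) (hb : b ∈ Fpos ∪ {0}) (hab : a + b = 0) :
    a = 0 ∧ b = 0 := by
  rcases cone_iff.mp ha with ha | ha <;> rcases cone_iff.mp hb with hb | hb
  · exact absurd (hab ▸ hadd _ ha _ hb) h0
  · simp_all
  · simp_all
  · simp_all

/-- The conclusion of statement 11, as a predicate on the coefficient matrix. -/
def Concl (Fpos : Set F) (R : Finset S) (c : S → S → F) : Prop :=
  (∀ ψ : R → F, ∃ φ : S → F, RealizableExt (qSum c) R ψ φ) ∧
    (∀ (ψ : R → F) (φ φ' : S → F), RealizableExt (qSum c) R ψ φ →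
      RealizableExt (qSum c) R ψ φ' → qSum c φ = qSum c φ') ∧
    ∃ c' : R → R → F, (∀ i j, c' i j ∈ Fpos ∪ {0}) ∧
      ∀ (ψ : R → F) (φ : S → F), RealizableExt (qSum c) R ψ φ →
        qSum c φ = ∑ i : R, ∑ j : R, c' i j * (ψ i - ψ j) ^ 2

lemma base_case (h0 : (0:F) ∉ Fpos)
    (hadd : ∀ x ∈ Fpos, ∀ y ∈ Fpos, x + y ∈ Fpos)
    (c : S → S → F) (hc : ∀ i j, c i j ∈ Fpos ∪ {0}) (R : Finset S)
    (hbase : ∀ x ∉ R, ∀ j, j ≠ x → c x j + c j x = 0) :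
    Concl Fpos R c := by
  have hzero : ∀ i j, i ≠ j → (i ∉ R ∨ j ∉ R) → c i j = 0 := by
    intro i j hij hR
    rcases hR with h | h
    · exact (cone_add_eq_zero h0 hadd (hc i j) (hc j i) (hbase i h j (Ne.symm hij))).1
    · exact (cone_add_eq_zero h0 hadd (hc j i) (hc i j) (hbase j h i hij)).2
  have qval : ∀ g : S → F, qSum c g = ∑ i ∈ R, ∑ j ∈ R, c i j * (g i - g j)^2 := by
    intro g
    unfold qSum
    have step1 : (∑ i : S, ∑ j : S, c i j * (g i - g j)^2)
        = ∑ i ∈ R, ∑ j : S, c i j * (g i - g j)^2 := by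
      refine (Finset.sum_subset (subset_univ R) ?_).symm
      intro i _ hi
      apply Finset.sum_eq_zero
      intro j _
      by_cases hij : i = j
      · subst hij; ring
      · rw [hzero i j hij (Or.inl hi)]; ring
    rw [step1]
    refine Finset.sum_congr rfl ?_
    intro i hi
    refine (Finset.sum_subset (subset_univ R) ?_).symm
    intro j _ hj
    have hij : i ≠ j := fun h => hj (h ▸ hi)
    rw [hzero i j hij (Or.inr hj)]; ring
  have qdep : ∀ g g' : S → F, (∀ x ∈ R, g x = g' x) → qSum c g = qSum c g' := by
    intro g g' hgg
    rw [qval, qval]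
    refine Finset.sum_congr rfl fun i hi => Finset.sum_congr rfl fun j hj => ?_
    rw [hgg i hi, hgg j hj]
  have qd0 : ∀ (φ : S → F) (x : S), x ∉ R → formalDeriv (qSum c) φ (delta x) = 0 := by
    intro φ x hx
    unfold formalDeriv
    have h1 : qSum c (φ + delta x) = qSum c φ := by
      apply qdep
      intro y hy
      have hyx : y ≠ x := by rintro rfl; exact hx hy
      have : delta (F := F) x y = 0 := if_neg hyx
      simp [Pi.add_apply, this]
    have h2 : qSum c (delta x) = 0 := by
      rw [qval]
      refine Finset.sum_eq_zero fun i hi => Finset.sum_eq_zero fun j hj => ?_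
      have hix : i ≠ x := by rintro rfl; exact hx hi
      have hjx : j ≠ x := by rintro rfl; exact hx hj
      have hi0 : delta (F := F) x i = 0 := if_neg hix
      have hj0 : delta (F := F) x j = 0 := if_neg hjx
      rw [hi0, hj0]; ring
    rw [h1, h2]; ring
  refine ⟨?_, ?_, ?_⟩
  · intro ψ
    refine ⟨fun x => if h : x ∈ R then ψ ⟨x, h⟩ else 0, ?_, fun x hx => qd0 _ x hx⟩
    intro x
    simp only [x.2, dif_pos]
  · intro ψ φ φ' h h'
    apply qdep
    intro x hx
    rw [h.1 ⟨x, hx⟩, h'.1 ⟨x, hx⟩]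
  · refine ⟨fun i j => c i j, fun i j => hc _ _, ?_⟩
    intro ψ φ h
    rw [qval]
    have : ∀ i ∈ R, ∀ j ∈ R, c i j * (φ i - φ j)^2
        = c i j * ((fun a : S => φ a) i - φ j)^2 := fun _ _ _ _ => rfl
    calc ∑ i ∈ R, ∑ j ∈ R, c i j * (φ i - φ j)^2
        = ∑ i : R, ∑ j : R, c (↑i) (↑j) * (φ ↑i - φ ↑j)^2 := by
          rw [Finset.sum_coe_sort R (fun a => ∑ j : R, c a (↑j) * (φ a - φ ↑j)^2)]
          refine Finset.sum_congr rfl fun i hi => ?_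
          rw [Finset.sum_coe_sort R (fun b => c i b * (φ i - φ b)^2)]
      _ = ∑ i : R, ∑ j : R, c (↑i) (↑j) * (ψ i - ψ j)^2 := by
          refine Finset.sum_congr rfl fun i _ => Finset.sum_congr rfl fun j _ => ?_
          rw [h.1 i, h.1 j]

end Aux

section Key
variable {F S : Type*} [Field F] [Fintype S] [DecidableEq S]

/-- single sum expansion -/
lemma single_sum_expand (a b : S → F) (x : F) :
    ∑ j, a j * (x - b j)^2 =
      (∑ j, a j) * x^2 - 2*x*(∑ j, a j * b j) + ∑ j, a j * b j^2 := by
  have h : ∀ j : S, a j * (x - b j)^2 = a j * x^2 - 2*x*(a j * b j) + a j * b j^2 :=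
    fun j => by ring
  rw [Finset.sum_congr rfl fun j _ => h j, Finset.sum_add_distrib, Finset.sum_sub_distrib,
    ← Finset.sum_mul, ← Finset.mul_sum]

/-- double sum expansion -/
lemma double_sum_expand (a b : S → F) (K : F) :
    ∑ i, ∑ j, K * a i * a j * (b i - b j)^2 =
      2*K*((∑ i, a i) * (∑ i, a i * b i^2)) - 2*K*(∑ i, a i * b i)^2 := by
  have inner : ∀ i : S, ∑ j, K * a i * a j * (b i - b j)^2 =
      K * (a i * b i^2) * (∑ j, a j) + K * a i * (∑ j, a j * b j^2)
        - 2*K*(a i * b i)*(∑ j, a j * b j) := by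
    intro i
    have h : ∀ j : S, K * a i * a j * (b i - b j)^2 =
        K * (a i * b i^2) * a j + K * a i * (a j * b j^2) - 2*K*(a i * b i)*(a j * b j) :=
      fun j => by ring
    rw [Finset.sum_congr rfl fun j _ => h j, Finset.sum_sub_distrib, Finset.sum_add_distrib,
      ← Finset.mul_sum, ← Finset.mul_sum, ← Finset.mul_sum]
  rw [Finset.sum_congr rfl fun i _ => inner i, Finset.sum_sub_distrib, Finset.sum_add_distrib]
  rw [← Finset.sum_mul, ← Finset.sum_mul, ← Finset.sum_mul]
  have e1 : ∑ i : S, K * (a i * b i^2) = K * ∑ i : S, a i * b i ^2 := by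
    rw [Finset.mul_sum]
  have e2 : ∑ i : S, K * a i = K * ∑ i : S, a i := by rw [Finset.mul_sum]
  have e3 : ∑ i : S, 2*K*(a i * b i) = 2*K* ∑ i : S, a i * b i := by rw [Finset.mul_sum]
  rw [e1, e2, e3]; ring

/-- The star weights at `s`. -/
def dCoef (c : S → S → F) (s : S) : S → F :=
  fun j => if j = s then 0 else c s j + c j s

/-- The coefficients after eliminating the vertex `s` (star-mesh transform). -/
def elimCoeff (c : S → S → F) (s : S) : S → S → F :=
  fun i j => if i = s ∨ j = s then 0
    else c i j + dCoef c s i * dCoef c s j / (2 * ∑ k, dCoef c s k)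


/-- Master identity. -/
lemma key1 (c : S → S → F) (s : S)
    (hD : (∑ k, dCoef c s k) ≠ 0) (h2 : (2:F) ≠ 0) (φ : S → F) :
    qSum c φ = qSum (elimCoeff c s) φ
      + ((∑ k, dCoef c s k) * φ s - ∑ j, dCoef c s j * φ j)^2 / (∑ k, dCoef c s k) := by
  set d : S → F := dCoef c s with hd
  set D : F := ∑ k, d k with hDdef
  set c₁ : S → S → F := elimCoeff c s with hc₁
  have hds : d s = 0 := by rw [hd]; simp [dCoef]
  have hdne : ∀ j, j ≠ s → d j = c s j + c j s := by
    intro j hj; rw [hd]; simp [dCoef, hj]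
  have hc₁s : ∀ i j, i = s ∨ j = s → c₁ i j = 0 := by
    intro i j hij; rw [hc₁]; simp only [elimCoeff]; rw [if_pos hij]
  have hc₁ne : ∀ i j, i ≠ s → j ≠ s → c₁ i j = c i j + d i * d j / (2*D) := by
    intro i j hi hj; rw [hc₁]; simp only [elimCoeff]
    rw [if_neg (by tauto)]
  -- the cross-term function
  set g : S → S → F := fun i j =>
    c i j * (φ i - φ j)^2 - c₁ i j * (φ i - φ j)^2 + d i * d j / (2*D) * (φ i - φ j)^2
    with hg
  have hgzero : ∀ i j, i ≠ s → j ≠ s → g i j = 0 := by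
    intro i j hi hj
    rw [hg]; simp only
    rw [hc₁ne i j hi hj]; ring
  have hrow : ∀ j, g s j = c s j * (φ s - φ j)^2 := by
    intro j
    rw [hg]; simp only
    rw [hc₁s s j (Or.inl rfl), hds]; ring
  have hcol : ∀ i, g i s = c i s * (φ s - φ i)^2 := by
    intro i
    rw [hg]; simp only
    rw [hc₁s i s (Or.inr rfl), hds]; ring
  -- cross-sum computation
  have hinner : ∀ i ∈ univ.erase s, ∑ j, g i j = c i s * (φ s - φ i)^2 := by
    intro i hi
    have his : i ≠ s := (mem_erase.mp hi).1
    rw [Finset.sum_eq_single_of_mem s (mem_univ s) fun j _ hjs => hgzero i j his hjs]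
    exact hcol i
  have hgss : g s s = 0 := by rw [hrow s]; ring
  have hcross : ∑ i, ∑ j, g i j = ∑ j, d j * (φ s - φ j)^2 := by
    have e1 : ∑ i, ∑ j, g i j = (∑ j, g s j) + ∑ i ∈ univ.erase s, ∑ j, g i j :=
      (Finset.add_sum_erase univ (fun i => ∑ j, g i j) (mem_univ s)).symm
    have e2 : ∑ i ∈ univ.erase s, (∑ j, g i j)
        = ∑ i ∈ univ.erase s, c i s * (φ s - φ i)^2 := Finset.sum_congr rfl hinner
    have e3 : (∑ j, g s j) = g s s + ∑ j ∈ univ.erase s, g s j :=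
      (Finset.add_sum_erase univ (fun j => g s j) (mem_univ s)).symm
    have e4 : ∑ j ∈ univ.erase s, g s j
        = ∑ j ∈ univ.erase s, c s j * (φ s - φ j)^2 :=
      Finset.sum_congr rfl fun j _ => hrow j
    have e5 : ∑ j, d j * (φ s - φ j)^2
        = d s * (φ s - φ s)^2 + ∑ j ∈ univ.erase s, d j * (φ s - φ j)^2 :=
      (Finset.add_sum_erase univ (fun j => d j * (φ s - φ j)^2) (mem_univ s)).symm
    have e6 : ∑ j ∈ univ.erase s, d j * (φ s - φ j)^2
        = ∑ j ∈ univ.erase s,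
            (c s j * (φ s - φ j)^2 + c j s * (φ s - φ j)^2) :=
      Finset.sum_congr rfl fun j hj => by rw [hdne j (mem_erase.mp hj).1]; ring
    rw [e1, e2, e3, hgss, zero_add, e4, e5, e6, hds, Finset.sum_add_distrib]
    ring
  -- rearrangement: qSum c φ - qSum c₁ φ + DoubleSum = cross-sum
  have hexpand : ∑ i, ∑ j, g i j
      = qSum c φ - qSum c₁ φ + ∑ i, ∑ j, d i * d j / (2*D) * (φ i - φ j)^2 := by
    unfold qSum
    rw [Finset.sum_congr rfl fun i (_ : i ∈ univ) => by
      rw [show (∑ j, g i j) = ∑ j, (c i j * (φ i - φ j)^2 - c₁ i j * (φ i - φ j)^2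
          + d i * d j / (2*D) * (φ i - φ j)^2) from rfl,
        Finset.sum_add_distrib, Finset.sum_sub_distrib]]
    rw [Finset.sum_add_distrib, Finset.sum_sub_distrib]
  -- expand the two auxiliary sums
  have hsingle : ∑ j, d j * (φ s - φ j)^2
      = D * (φ s)^2 - 2*(φ s)*(∑ j, d j * φ j) + ∑ j, d j * (φ j)^2 :=
    single_sum_expand d φ (φ s)
  have hdouble : ∑ i, ∑ j, d i * d j / (2*D) * (φ i - φ j)^2
      = 2*(2*D)⁻¹*(D * ∑ i, d i * (φ i)^2) - 2*(2*D)⁻¹*(∑ i, d i * φ i)^2 := by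
    rw [Finset.sum_congr rfl fun i (_ : i ∈ univ) => Finset.sum_congr rfl
      fun j (_ : j ∈ univ) => show d i * d j / (2*D) * (φ i - φ j)^2
        = (2*D)⁻¹ * d i * d j * (φ i - φ j)^2 from by ring]
    rw [double_sum_expand d φ (2*D)⁻¹, ← hDdef]
  -- combine
  have h2D : (2*D) ≠ 0 := mul_ne_zero h2 hD
  have hmain : qSum c φ - qSum c₁ φ
      = (D * φ s - ∑ j, d j * φ j)^2 / D := by
    have h' : qSum c φ - qSum c₁ φ
        = D * (φ s)^2 - 2*(φ s)*(∑ j, d j * φ j) + (∑ j, d j * (φ j)^2)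
          - (2*(2*D)⁻¹*(D * ∑ i, d i * (φ i)^2) - 2*(2*D)⁻¹*(∑ i, d i * φ i)^2) := by
      have hh := hcross
      rw [hexpand, hsingle, hdouble] at hh
      linear_combination hh
    rw [h']
    field_simp
    ring
  linear_combination hmain

end Key

section Step
variable {F S : Type*} [Field F] [Fintype S] [DecidableEq S] {Fpos : Set F}

lemma cone_sum (h0 : (0:F) ∉ Fpos) (hadd : ∀ x ∈ Fpos, ∀ y ∈ Fpos, x + y ∈ Fpos)
    {ι : Type*} (t : Finset ι) (f : ι → F) (hf : ∀ j ∈ t, f j ∈ Fpos ∪ {0}) :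
    ∑ j ∈ t, f j ∈ Fpos ∪ {0} := by
  classical
  induction t using Finset.induction_on with
  | empty => simp
  | @insert a tt hx ih =>
    rw [Finset.sum_insert hx]
    exact cone_add h0 hadd (hf a (mem_insert_self a tt))
      (ih fun j hj => hf j (mem_insert_of_mem hj))

lemma cone_pos (h0 : (0:F) ∉ Fpos) {a : F} (ha : a ∈ Fpos ∪ {0}) (hne : a ≠ 0) :
    a ∈ Fpos := by
  rcases cone_iff.mp ha with h | h
  · exact h
  · exact absurd h hne

lemma pos_ne_zero (h0 : (0:F) ∉ Fpos) {a : F} (ha : a ∈ Fpos) : a ≠ 0 := by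
  rintro rfl; exact h0 ha

lemma cone_sum_eq_zero (h0 : (0:F) ∉ Fpos) (hadd : ∀ x ∈ Fpos, ∀ y ∈ Fpos, x + y ∈ Fpos)
    {ι : Type*} (t : Finset ι) (f : ι → F) (hf : ∀ j ∈ t, f j ∈ Fpos ∪ {0})
    (hsum : ∑ j ∈ t, f j = 0) : ∀ j ∈ t, f j = 0 := by
  classical
  induction t using Finset.induction_on with
  | empty => simp
  | @insert a tt hx ih =>
    rw [Finset.sum_insert hx] at hsum
    have h1 := cone_add_eq_zero h0 hadd (hf a (mem_insert_self a tt))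
      (cone_sum h0 hadd tt f fun j hj => hf j (mem_insert_of_mem hj)) hsum
    intro j hj
    rcases mem_insert.mp hj with rfl | hj
    · exact h1.1
    · exact ih (fun j hj => hf j (mem_insert_of_mem hj)) h1.2 j hj

lemma dCoef_cone (h0 : (0:F) ∉ Fpos) (hadd : ∀ x ∈ Fpos, ∀ y ∈ Fpos, x + y ∈ Fpos)
    (c : S → S → F) (hc : ∀ i j, c i j ∈ Fpos ∪ {0}) (s : S) (j : S) :
    dCoef c s j ∈ Fpos ∪ {0} := by
  unfold dCoef
  split
  · exact cone_iff.mpr (Or.inr rfl)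
  · exact cone_add h0 hadd (hc s j) (hc j s)

lemma Dpos (h0 : (0:F) ∉ Fpos) (hadd : ∀ x ∈ Fpos, ∀ y ∈ Fpos, x + y ∈ Fpos)
    (c : S → S → F) (hc : ∀ i j, c i j ∈ Fpos ∪ {0}) (s : S)
    (hD : (∑ k, dCoef c s k) ≠ 0) : (∑ k, dCoef c s k) ∈ Fpos :=
  cone_pos h0 (cone_sum h0 hadd univ _ fun j _ => dCoef_cone h0 hadd c hc s j) hD

lemma two_mem_pos (h0 : (0:F) ∉ Fpos)
    (hadd : ∀ x ∈ Fpos, ∀ y ∈ Fpos, x + y ∈ Fpos)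
    (hdiv : ∀ x ∈ Fpos, ∀ y ∈ Fpos, x / y ∈ Fpos)
    {a : F} (ha : a ∈ Fpos) : (2:F) ∈ Fpos := by
  have h1 : (1:F) ∈ Fpos := by
    have := hdiv _ ha _ ha
    rwa [div_self (pos_ne_zero h0 ha)] at this
  have h2 := hadd _ h1 _ h1
  rwa [one_add_one_eq_two] at h2

lemma elim_cone (h0 : (0:F) ∉ Fpos) (hadd : ∀ x ∈ Fpos, ∀ y ∈ Fpos, x + y ∈ Fpos)
    (hmul : ∀ x ∈ Fpos, ∀ y ∈ Fpos, x * y ∈ Fpos)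
    (hdiv : ∀ x ∈ Fpos, ∀ y ∈ Fpos, x / y ∈ Fpos)
    (c : S → S → F) (hc : ∀ i j, c i j ∈ Fpos ∪ {0}) (s : S)
    (hD : (∑ k, dCoef c s k) ≠ 0) :
    ∀ i j, elimCoeff c s i j ∈ Fpos ∪ {0} := by
  intro i j
  unfold elimCoeff
  split
  · exact cone_iff.mpr (Or.inr rfl)
  · have hDp := Dpos h0 hadd c hc s hD
    have h2D : (2 * ∑ k, dCoef c s k) ∈ Fpos := hmul _ (two_mem_pos h0 hadd hdiv hDp) _ hDp
    apply cone_add h0 hadd (hc i j)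
    rcases cone_iff.mp (dCoef_cone h0 hadd c hc s i) with hi | hi
    · rcases cone_iff.mp (dCoef_cone h0 hadd c hc s j) with hj | hj
      · exact cone_iff.mpr (Or.inl (hdiv _ (hmul _ hi _ hj) _ h2D))
      · rw [hj]; simp
    · rw [hi]; simp

lemma c1_indep (c : S → S → F) (s : S) (g g' : S → F) (h : ∀ x, x ≠ s → g x = g' x) :
    qSum (elimCoeff c s) g = qSum (elimCoeff c s) g' := by
  unfold qSum
  refine Finset.sum_congr rfl fun i _ => Finset.sum_congr rfl fun j _ => ?_
  by_cases hij : i = s ∨ j = s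
  · rw [show elimCoeff c s i j = 0 from by unfold elimCoeff; rw [if_pos hij], zero_mul,
      zero_mul]
  · push_neg at hij
    rw [h i hij.1, h j hij.2]

lemma qc1_delta (c : S → S → F) (s : S) : qSum (elimCoeff c s) (delta s) = 0 := by
  have h : qSum (elimCoeff c s) (delta s) = qSum (elimCoeff c s) (fun _ => 0) :=
    c1_indep c s _ _ (fun x hx => if_neg hx)
  rw [h]; unfold qSum; simp

lemma fd_c1_s (c : S → S → F) (s : S) (φ : S → F) :
    formalDeriv (qSum (elimCoeff c s)) φ (delta s) = 0 := by
  unfold formalDeriv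
  rw [qc1_delta, c1_indep c s (φ + delta s) φ (fun x hx => by
    simp [Pi.add_apply, delta, hx])]
  ring

lemma Tadd (d : S → F) (φ χ : S → F) :
    ∑ j, d j * (φ + χ) j = (∑ j, d j * φ j) + ∑ j, d j * χ j := by
  rw [← Finset.sum_add_distrib]
  exact Finset.sum_congr rfl fun j _ => by rw [Pi.add_apply]; ring

lemma Tdelta (d : S → F) (x : S) : ∑ j, d j * delta x j = d x := by
  rw [Finset.sum_eq_single_of_mem x (mem_univ x)]
  · simp [delta]
  · intro j _ hjx
    simp [delta, hjx]

lemma fd_eq (c : S → S → F) (s : S) (hD : (∑ k, dCoef c s k) ≠ 0) (h2 : (2:F) ≠ 0)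
    (φ χ : S → F) :
    formalDeriv (qSum c) φ χ = formalDeriv (qSum (elimCoeff c s)) φ χ
      + 2 * ((∑ k, dCoef c s k) * φ s - ∑ j, dCoef c s j * φ j)
          * ((∑ k, dCoef c s k) * χ s - ∑ j, dCoef c s j * χ j)
          / (∑ k, dCoef c s k) := by
  unfold formalDeriv
  rw [key1 c s hD h2 (φ + χ), key1 c s hD h2 φ, key1 c s hD h2 χ, Tadd, Pi.add_apply]
  field_simp
  ring

lemma valeq (c : S → S → F) (s : S) (hD : (∑ k, dCoef c s k) ≠ 0) (h2 : (2:F) ≠ 0)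
    (φ : S → F) (hl : (∑ k, dCoef c s k) * φ s - (∑ j, dCoef c s j * φ j) = 0) :
    qSum c φ = qSum (elimCoeff c s) φ := by
  rw [key1 c s hD h2 φ, hl]
  simp

lemma req (c : S → S → F) (R : Finset S) (s : S) (hsR : s ∉ R)
    (hD : (∑ k, dCoef c s k) ≠ 0) (h2 : (2:F) ≠ 0) (ψ : R → F) (φ : S → F) :
    RealizableExt (qSum c) R ψ φ ↔
      RealizableExt (qSum (elimCoeff c s)) R ψ φ ∧
        (∑ k, dCoef c s k) * φ s - (∑ j, dCoef c s j * φ j) = 0 := by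
  constructor
  · rintro ⟨h1, h2'⟩
    have hs0 := h2' s hsR
    rw [fd_eq c s hD h2 φ (delta s), fd_c1_s, zero_add] at hs0
    have hls : (∑ k, dCoef c s k) * delta (F := F) s s
        - ∑ j, dCoef c s j * delta s j = (∑ k, dCoef c s k) := by
      rw [Tdelta]
      simp [delta, dCoef]
    rw [hls, mul_div_assoc, div_self hD, mul_one] at hs0
    have hl : (∑ k, dCoef c s k) * φ s - ∑ j, dCoef c s j * φ j = 0 :=
      (mul_eq_zero.mp hs0).resolve_left h2
    refine ⟨⟨h1, ?_⟩, hl⟩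
    intro x hx
    have hfd := h2' x hx
    rw [fd_eq c s hD h2 φ (delta x), hl] at hfd
    simpa using hfd
  · rintro ⟨⟨h1, h2'⟩, hl⟩
    refine ⟨h1, ?_⟩
    intro x hx
    rw [fd_eq c s hD h2 φ (delta x), hl]
    by_cases hxs : x = s
    · subst hxs; rw [fd_c1_s]; simp
    · rw [h2' x hx]; simp

lemma adjust (c : S → S → F) (R : Finset S) (s : S) (hsR : s ∉ R)
    (hD : (∑ k, dCoef c s k) ≠ 0) (h2 : (2:F) ≠ 0) (ψ : R → F) (φ₁ : S → F)
    (h : RealizableExt (qSum (elimCoeff c s)) R ψ φ₁) :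
    ∃ φ, RealizableExt (qSum c) R ψ φ := by
  set t : F := -((∑ k, dCoef c s k) * φ₁ s - ∑ j, dCoef c s j * φ₁ j)
      / (∑ k, dCoef c s k) with ht
  refine ⟨φ₁ + fun x => t * delta s x, ?_⟩
  set φ : S → F := φ₁ + fun x => t * delta s x with hφ
  have hagree : ∀ x, x ≠ s → φ x = φ₁ x := by
    intro x hx
    simp [hφ, Pi.add_apply, delta, hx]
  have hφs : φ s = φ₁ s + t := by simp [hφ, delta]
  have hT : ∑ j, dCoef c s j * φ j = ∑ j, dCoef c s j * φ₁ j := by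
    refine Finset.sum_congr rfl fun j _ => ?_
    by_cases hj : j = s
    · rw [hj, show dCoef c s s = 0 from if_pos rfl]
      ring
    · rw [hagree j hj]
  have hl : (∑ k, dCoef c s k) * φ s - ∑ j, dCoef c s j * φ j = 0 := by
    rw [hφs, hT, ht]
    field_simp
    ring
  rw [req c R s hsR hD h2]
  refine ⟨⟨?_, ?_⟩, hl⟩
  · intro x
    have hxs : (x : S) ≠ s := by
      rintro hh
      exact hsR (hh ▸ x.2)
    rw [hagree _ hxs]
    exact h.1 x
  · intro x hx
    have e1 : qSum (elimCoeff c s) (φ + delta x) = qSum (elimCoeff c s) (φ₁ + delta x) :=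
      c1_indep _ _ _ _ fun y hy => by simp [Pi.add_apply, hagree y hy]
    have e2 : qSum (elimCoeff c s) φ = qSum (elimCoeff c s) φ₁ :=
      c1_indep _ _ _ _ hagree
    unfold formalDeriv
    rw [e1, e2]
    exact h.2 x hx

lemma step_case (h0 : (0:F) ∉ Fpos)
    (hadd : ∀ x ∈ Fpos, ∀ y ∈ Fpos, x + y ∈ Fpos)
    (hdiv : ∀ x ∈ Fpos, ∀ y ∈ Fpos, x / y ∈ Fpos)
    (c : S → S → F) (hc : ∀ i j, c i j ∈ Fpos ∪ {0}) (R : Finset S) (s : S)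
    (hsR : s ∉ R) (hD : (∑ k, dCoef c s k) ≠ 0)
    (IH : Concl Fpos R (elimCoeff c s)) : Concl Fpos R c := by
  have h2 : (2:F) ≠ 0 :=
    pos_ne_zero h0 (two_mem_pos h0 hadd hdiv (Dpos h0 hadd c hc s hD))
  obtain ⟨ihA, ihB, c', hc'cone, hc'val⟩ := IH
  refine ⟨?_, ?_, c', hc'cone, ?_⟩
  · intro ψ
    obtain ⟨φ₁, hφ₁⟩ := ihA ψ
    exact adjust c R s hsR hD h2 ψ φ₁ hφ₁
  · intro ψ φ φ' h h'
    rw [req c R s hsR hD h2] at h h'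
    rw [valeq c s hD h2 φ h.2, valeq c s hD h2 φ' h'.2]
    exact ihB ψ φ φ' h.1 h'.1
  · intro ψ φ h
    rw [req c R s hsR hD h2] at h
    rw [valeq c s hD h2 φ h.2]
    exact hc'val ψ φ h.1

end Step

open scoped Classical in
lemma main_ind {F S : Type*} [Field F] [Fintype S] [DecidableEq S]
    (Fpos : Set F) (h0 : (0 : F) ∉ Fpos)
    (hadd : ∀ x ∈ Fpos, ∀ y ∈ Fpos, x + y ∈ Fpos)
    (hmul : ∀ x ∈ Fpos, ∀ y ∈ Fpos, x * y ∈ Fpos)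
    (hdiv : ∀ x ∈ Fpos, ∀ y ∈ Fpos, x / y ∈ Fpos)
    (R : Finset S) :
    ∀ (n : ℕ) (c : S → S → F), (∀ i j, c i j ∈ Fpos ∪ {0}) →
      (univ.filter (fun x => x ∉ R ∧ ∃ j, j ≠ x ∧ c x j + c j x ≠ 0)).card ≤ n →
      Concl Fpos R c := by
  intro n
  induction n with
  | zero =>
    intro c hc hcard
    apply base_case h0 hadd c hc R
    intro x hx j hj
    by_contra hne
    have hmem : x ∈ univ.filter (fun x => x ∉ R ∧ ∃ j, j ≠ x ∧ c x j + c j x ≠ 0) :=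
      mem_filter.mpr ⟨mem_univ x, hx, j, hj, hne⟩
    have := Finset.card_eq_zero.mp (Nat.le_zero.mp hcard)
    rw [this] at hmem
    exact absurd hmem (notMem_empty x)
  | succ n ih =>
    intro c hc hcard
    by_cases hE : (univ.filter (fun x => x ∉ R ∧ ∃ j, j ≠ x ∧ c x j + c j x ≠ 0)).Nonempty
    · obtain ⟨s, hs⟩ := hE
      obtain ⟨-, hsR, j₀, hj₀, hne₀⟩ := mem_filter.mp hs
      have hD : (∑ k, dCoef c s k) ≠ 0 := by
        intro hsum
        have hall := cone_sum_eq_zero h0 hadd univ (dCoef c s)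
          (fun j _ => dCoef_cone h0 hadd c hc s j) hsum
        have := hall j₀ (mem_univ j₀)
        unfold dCoef at this
        rw [if_neg ?_] at this
        · exact hne₀ this
        · rintro rfl
          exact hj₀ rfl
      apply step_case h0 hadd hdiv c hc R s hsR hD
      apply ih (elimCoeff c s) (elim_cone h0 hadd hmul hdiv c hc s hD)
      have hsub : (univ.filter (fun x => x ∉ R ∧ ∃ j, j ≠ x ∧
            elimCoeff c s x j + elimCoeff c s j x ≠ 0))
          ⊆ (univ.filter (fun x => x ∉ R ∧ ∃ j, j ≠ x ∧ c x j + c j x ≠ 0)).erase s := by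
        intro x hx
        obtain ⟨-, hxR, j, hjx, hne⟩ := mem_filter.mp hx
        have hxs : x ≠ s := fun hxy => hne (by
          rw [hxy, show elimCoeff c s s j = 0 from by
              unfold elimCoeff; rw [if_pos (Or.inl rfl)],
            show elimCoeff c s j s = 0 from by
              unfold elimCoeff; rw [if_pos (Or.inr rfl)]]
          ring)
        have hjs : j ≠ s := fun hjy => hne (by
          rw [hjy, show elimCoeff c s x s = 0 from by
              unfold elimCoeff; rw [if_pos (Or.inr rfl)],
            show elimCoeff c s s x = 0 from by
              unfold elimCoeff; rw [if_pos (Or.inl rfl)]]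
          ring)
        refine mem_erase.mpr ⟨hxs, mem_filter.mpr ⟨mem_univ x, hxR, ?_⟩⟩
        by_cases hcx : ∃ j', j' ≠ x ∧ c x j' + c j' x ≠ 0
        · exact hcx
        · exfalso
          push_neg at hcx
          have hdx : dCoef c s x = 0 := by
            unfold dCoef
            rw [if_neg hxs]
            linear_combination hcx s (Ne.symm hxs)
          apply hne
          have hx' : ¬(x = s ∨ j = s) := by tauto
          have hj' : ¬(j = s ∨ x = s) := by tauto
          unfold elimCoeff
          rw [if_neg hx', if_neg hj', hdx, zero_mul, mul_zero, zero_div,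
            add_zero, add_zero]
          exact hcx j hjx
      have hcd := Finset.card_le_card hsub
      have herase := Finset.card_erase_of_mem hs
      omega
    · apply base_case h0 hadd c hc R
      intro x hx j hj
      by_contra hne
      exact hE ⟨x, mem_filter.mpr ⟨mem_univ x, hx, j, hj, hne⟩⟩


/-- Let `P` be a Dirichlet form over a field `F` with positive elements
`Fpos`, on a finite set `S`, and `R ⊆ S`.  Then (a) every `ψ : R → F` admits a
realizable extension; (b) any two realizable extensions of `ψ` give the same value of
`P`; and (c) the resulting function of `ψ` is itself a Dirichlet form over `F` on `R`. -/
theorem statement11 {F S : Type*} [Field F] [Fintype S] [DecidableEq S]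
    (Fpos : Set F) (h0 : (0 : F) ∉ Fpos)
    (hadd : ∀ x ∈ Fpos, ∀ y ∈ Fpos, x + y ∈ Fpos)
    (hmul : ∀ x ∈ Fpos, ∀ y ∈ Fpos, x * y ∈ Fpos)
    (hdiv : ∀ x ∈ Fpos, ∀ y ∈ Fpos, x / y ∈ Fpos)
    (c : S → S → F) (hc : ∀ i j, c i j ∈ Fpos ∪ {0}) (R : Finset S) :
    (∀ ψ : R → F, ∃ φ : S → F, RealizableExt (qSum c) R ψ φ) ∧
      (∀ (ψ : R → F) (φ φ' : S → F), RealizableExt (qSum c) R ψ φ →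
        RealizableExt (qSum c) R ψ φ' → qSum c φ = qSum c φ') ∧
      ∃ c' : R → R → F, (∀ i j, c' i j ∈ Fpos ∪ {0}) ∧
        ∀ (ψ : R → F) (φ : S → F), RealizableExt (qSum c) R ψ φ →
          qSum c φ = ∑ i : R, ∑ j : R, c' i j * (ψ i - ψ j) ^ 2 :=
  main_ind Fpos h0 hadd hmul hdiv R _ c hc le_rfl
end
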